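/- arXiv:1307.6576 — 6 statements merged into one kernel-verified Lean document; each statement's English description precedes it below -/
import Mathlib

section
/- Let U be a positive bounded linear operator on the space of continuous periodic functions (with the pointwise order), let φ be a strictly positive fixed point of U (Uφ = φ, φ(x) > 0 for all x). If ψ satisfies (I - U)ψ = γφ for some real γ, then γ = 0 and hence (I-U)²ψ = 0 implies (I-U)ψ = 0. -/
/-!
Iterating `ψ - U ψ = γ • φ` gives `U^[n] ψ = ψ - (n * γ) • φ`. Being continuous and periodic,
`φ` attains a positive minimum `m`, so `ψ + (‖ψ‖ / m) • φ ≥ 0` satisfies the same relation, and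
positivity of `U` yields `(n * γ) • φ ≤ ψ + (‖ψ‖ / m) • φ` for all `n`; hence `γ ≤ 0`.
The same argument for `-ψ` gives `γ ≥ 0`.
-/

open Function Submodule

theorem Function.Periodic.of_mem_span_int {E β : Type*} [AddCommGroup E] {f : E → β}
    {s : Set E} (h : ∀ c ∈ s, Periodic f c) {c : E} (hc : c ∈ span ℤ s) : Periodic f c :=
  span_induction h (fun x => by rw [add_zero]) (fun _ _ _ _ => Periodic.add_period)
    (fun n _ _ hx => hx.zsmul n) hc

theorem ZSpan.exists_forall_le_of_periodic {E ι β : Type*} [NormedAddCommGroup E]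
    [NormedSpace ℝ E] [FiniteDimensional ℝ E] [Fintype ι] [LinearOrder β] [TopologicalSpace β]
    [OrderClosedTopology β] (b : Module.Basis ι ℝ E) {f : E → β} (hf : Continuous f)
    (hper : ∀ i, Periodic f (b i)) : ∃ a, ∀ x, f a ≤ f x := by
  have hK : IsCompact (closure (fundamentalDomain b)) :=
    (fundamentalDomain_isBounded b).isCompact_closure
  obtain ⟨a, -, ha⟩ := hK.exists_isMinOn
    ⟨fract b 0, subset_closure (fract_mem_fundamentalDomain b 0)⟩ hf.continuousOn
  refine ⟨a, fun x => ?_⟩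
  have hfract : f (fract b x) = f x := by
    rw [fract_apply, sub_eq_add_neg]
    exact Periodic.of_mem_span_int (Set.forall_mem_range.mpr hper) (neg_mem (floor b x).2) x
  exact hfract ▸ ha (subset_closure (fract_mem_fundamentalDomain b x))

namespace LinearMap

variable {R M : Type*} [CommRing R] [AddCommGroup M] [Module R M] {U : M →ₗ[R] M} {φ ψ : M}
  {γ : R}

theorem iterate_apply_of_sub_apply_eq_smul (hUφ : U φ = φ) (hψ : ψ - U ψ = γ • φ) (n : ℕ) :
    U^[n] ψ = ψ - (n * γ) • φ := by
  have hUψ : U ψ = ψ - γ • φ := by rw [← hψ, sub_sub_cancel]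
  induction n with
  | zero => simp
  | succ n ih =>
    rw [Function.iterate_succ_apply', ih, map_sub, map_smul, hUφ, hUψ]
    push_cast
    module

theorem smul_le_of_sub_apply_eq_smul [PartialOrder M] [IsOrderedAddMonoid M]
    (hU : ∀ u, 0 ≤ u → 0 ≤ U u) (hUφ : U φ = φ) (hψ : ψ - U ψ = γ • φ) (hψ₀ : 0 ≤ ψ)
    (n : ℕ) : (n * γ) • φ ≤ ψ := by
  have hUn : 0 ≤ U^[n] ψ := by
    induction n with
    | zero => exact hψ₀
    | succ n ih => exact Function.iterate_succ_apply' U n ψ ▸ hU _ ih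
  rwa [iterate_apply_of_sub_apply_eq_smul hUφ hψ, sub_nonneg] at hUn

end LinearMap

namespace BoundedContinuousFunction

variable {α : Type*} [TopologicalSpace α] {U : (α →ᵇ ℝ) →ₗ[ℝ] (α →ᵇ ℝ)} {φ ψ : α →ᵇ ℝ}
  {γ : ℝ}

theorem nonpos_of_sub_apply_eq_smul (hU : ∀ u, 0 ≤ u → 0 ≤ U u) (hUφ : U φ = φ)
    {a : α} (ha : 0 < φ a) (hψ : ψ - U ψ = γ • φ) (hψ₀ : 0 ≤ ψ) : γ ≤ 0 := by
  by_contra! hγ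
  obtain ⟨n, hn⟩ := exists_nat_gt (ψ a / (γ * φ a))
  have hle : (n * γ) * φ a ≤ ψ a := LinearMap.smul_le_of_sub_apply_eq_smul hU hUφ hψ hψ₀ n a
  rw [div_lt_iff₀ (mul_pos hγ ha)] at hn
  linarith

theorem nonneg_add_smul_of_le {m : ℝ} (hm : 0 < m) (hφ : ∀ a, m ≤ φ a) (ψ : α →ᵇ ℝ) :
    0 ≤ ψ + (‖ψ‖ / m) • φ := by
  intro a
  have hψa : -‖ψ‖ ≤ ψ a := neg_le_of_abs_le (ψ.norm_coe_le_norm a)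
  have hφa : ‖ψ‖ ≤ (‖ψ‖ / m) * φ a :=
    calc ‖ψ‖ = (‖ψ‖ / m) * m := (div_mul_cancel₀ _ hm.ne').symm
      _ ≤ (‖ψ‖ / m) * φ a := by gcongr; exact hφ a
  show 0 ≤ ψ a + (‖ψ‖ / m) * φ a
  linarith

theorem eq_zero_of_sub_apply_eq_smul [Nonempty α] (hU : ∀ u, 0 ≤ u → 0 ≤ U u)
    (hUφ : U φ = φ) {m : ℝ} (hm : 0 < m) (hφ : ∀ a, m ≤ φ a) (hψ : ψ - U ψ = γ • φ) :
    γ = 0 := by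
  obtain ⟨a⟩ := ‹Nonempty α›
  have hφa : 0 < φ a := hm.trans_le (hφ a)
  have shift : ∀ {w : α →ᵇ ℝ} {δ : ℝ} (c : ℝ), w - U w = δ • φ →
      (w + c • φ) - U (w + c • φ) = δ • φ := by
    intro w δ c h
    rw [map_add, map_smul, hUφ, ← h]
    abel
  have hneg : -ψ - U (-ψ) = (-γ) • φ := by
    rw [map_neg]
    linear_combination (norm := module) -hψ
  have h₁ := nonpos_of_sub_apply_eq_smul hU hUφ hφa (shift _ hψ) (nonneg_add_smul_of_le hm hφ ψ)
  have h₂ := nonpos_of_sub_apply_eq_smul hU hUφ hφa (shift _ hneg)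
    (nonneg_add_smul_of_le hm hφ (-ψ))
  linarith

end BoundedContinuousFunction

noncomputable def periodBasis {N : ℕ} {T : ℝ} (hT : 0 < T) {p : Fin N → ℝ}
    (hp : ∀ i, 0 < p i) : Module.Basis (Unit ⊕ Fin N) ℝ (ℝ × EuclideanSpace ℝ (Fin N)) :=
  ((Module.Basis.singleton Unit ℝ).isUnitSMul fun _ => hT.ne'.isUnit).prod
    ((EuclideanSpace.basisFun (Fin N) ℝ).toBasis.isUnitSMul fun i => (hp i).ne'.isUnit)

theorem periodic_periodBasis {N : ℕ} {T : ℝ} (hT : 0 < T) {p : Fin N → ℝ} (hp : ∀ i, 0 < p i)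
    {f : ℝ × EuclideanSpace ℝ (Fin N) → ℝ} (hfT : ∀ t x, f (t + T, x) = f (t, x))
    (hfx : ∀ t x i, f (t, x + p i • EuclideanSpace.single i (1 : ℝ)) = f (t, x))
    (j : Unit ⊕ Fin N) : Periodic f (periodBasis hT hp j) := by
  rcases j with _ | i
  all_goals rintro ⟨t, x⟩
  · simpa [periodBasis, Module.Basis.isUnitSMul_apply] using hfT t x
  · simpa [periodBasis, Module.Basis.isUnitSMul_apply] using hfx t x i

theorem positive_operator_fixed_point_forces_zero_general {N : ℕ} (T : ℝ) (hT : 0 < T)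
    (p : Fin N → ℝ) (hp : ∀ i, 0 < p i)
    (U : BoundedContinuousFunction (ℝ × EuclideanSpace ℝ (Fin N)) ℝ →L[ℝ]
         BoundedContinuousFunction (ℝ × EuclideanSpace ℝ (Fin N)) ℝ)
    (hUpos : ∀ u : BoundedContinuousFunction (ℝ × EuclideanSpace ℝ (Fin N)) ℝ,
      (∀ a, 0 ≤ u a) → ∀ a, 0 ≤ U u a)
    (φ ψ : BoundedContinuousFunction (ℝ × EuclideanSpace ℝ (Fin N)) ℝ)
    (hφperT : ∀ t x, φ (t + T, x) = φ (t, x))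
    (hφperx : ∀ t x i, φ (t, x + p i • EuclideanSpace.single i (1 : ℝ)) = φ (t, x))
    (hUφ : U φ = φ) (hφpos : ∀ a, 0 < φ a)
    (γ : ℝ) (hψ : ψ - U ψ = γ • φ) :
    γ = 0 ∧ ψ - U ψ = 0 := by
  obtain ⟨a₀, ha₀⟩ := ZSpan.exists_forall_le_of_periodic (periodBasis hT hp) φ.continuous
    (periodic_periodBasis hT hp hφperT hφperx)
  have hγ : γ = 0 := BoundedContinuousFunction.eq_zero_of_sub_apply_eq_smul
    (U := U.toLinearMap) hUpos hUφ (hφpos a₀) ha₀ hψ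
  exact ⟨hγ, by rw [hψ, hγ, zero_smul]⟩

/-- If `U` is a positive bounded linear operator on the space of continuous
(time- and space-) periodic functions, `φ` a strictly positive fixed point of `U`, and
`(I - U) ψ = γ • φ`, then `γ = 0` and hence `(I - U) ψ = 0`. -/
theorem positive_operator_fixed_point_forces_zero {N : ℕ} (T : ℝ) (hT : 0 < T)
    (p : Fin N → ℝ) (hp : ∀ i, 0 < p i)
    (U : BoundedContinuousFunction (ℝ × EuclideanSpace ℝ (Fin N)) ℝ →L[ℝ]
         BoundedContinuousFunction (ℝ × EuclideanSpace ℝ (Fin N)) ℝ)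
    (hUpos : ∀ u : BoundedContinuousFunction (ℝ × EuclideanSpace ℝ (Fin N)) ℝ,
      (∀ a, 0 ≤ u a) → ∀ a, 0 ≤ U u a)
    (φ ψ : BoundedContinuousFunction (ℝ × EuclideanSpace ℝ (Fin N)) ℝ)
    (hφperT : ∀ t x, φ (t + T, x) = φ (t, x))
    (hφperx : ∀ t x i, φ (t, x + p i • EuclideanSpace.single i (1 : ℝ)) = φ (t, x))
    (hψperT : ∀ t x, ψ (t + T, x) = ψ (t, x))
    (hψperx : ∀ t x i, ψ (t, x + p i • EuclideanSpace.single i (1 : ℝ)) = ψ (t, x))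
    (hUφ : U φ = φ) (hφpos : ∀ a, 0 < φ a)
    (γ : ℝ) (hψ : ψ - U ψ = γ • φ) :
    γ = 0 ∧ ψ - U ψ = 0 :=
  positive_operator_fixed_point_forces_zero_general T hT p hp U hUpos φ ψ hφperT hφperx hUφ hφpos γ
    hψ
end

section
/- Let k : ℝ^N → ℝ be continuous, nonnegative, with k(z) > 0 for ‖z‖ < r₀ and k(z) = 0 for ‖z‖ ≥ r₀, and ∫ k = 1. Then for every ξ ∈ S^{N−1}, the function μ ↦ ∫_{ℝ^N} e^{−μ y·ξ} k(y) dy satisfies ∫ e^{−μ y·ξ} k(y) dy ≥ m₀ + m μ² for all μ > 0, where m₀ = k₀·vol(B(0,r₀/2)), m = inf_{ξ∈S^{N−1}} k₀ ∫_{‖y‖≤r₀/2} (y·ξ)²/2 dy > 0, and k₀ = inf_{‖y‖≤r₀/2} k(y) > 0. -/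
/-!
On `B = closedBall 0 (r₀ / 2)` the kernel is at least `k₀ = min_B k > 0`. As `B = -B`, the odd
part of `y ↦ e^{-μ⟪y, ξ⟫}` integrates to zero over `B`, so `∫_B e^{-μ⟪y, ξ⟫} = ∫_B cosh (μ⟪y, ξ⟫)`,
and `cosh t ≥ 1 + t² / 2` because the even terms of its power series are nonnegative. The moment
`∫_B ⟪y, ξ⟫²` is the same for all unit vectors `ξ` (a reflection preserving `B` carries one to
another), so the infimum over the sphere is attained at every point; it is positive because
`⟪·, ξ⟫` vanishes only on a null hyperplane.
-/

open MeasureTheory Metric Real Set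
open scoped Pointwise

theorem Real.one_add_sq_div_two_le_cosh (x : ℝ) : 1 + x ^ 2 / 2 ≤ cosh x := by
  have h := sum_le_hasSum (Finset.range 2) (fun n _ => by rw [pow_mul]; positivity)
    (hasSum_cosh x)
  norm_num [Finset.sum_range_succ] at h
  linarith

theorem IsCompact.sInf_image_pos {X : Type*} [TopologicalSpace X] {s : Set X} {f : X → ℝ}
    (hs : IsCompact s) (hne : s.Nonempty) (hf : ContinuousOn f s) (hpos : ∀ x ∈ s, 0 < f x) :
    0 < sInf (f '' s) := by
  obtain ⟨x, hx, hfx⟩ := (hs.image_of_continuousOn hf).sInf_mem (hne.image f)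
  exact hfx ▸ hpos x hx

theorem csInf_image_eq_of_forall_eq {α β : Type*} [ConditionallyCompleteLattice β]
    {f : α → β} {s : Set α} {a : α} (ha : a ∈ s) (h : ∀ x ∈ s, f x = f a) :
    sInf (f '' s) = f a := by
  rw [(Set.image_congr h).trans (Set.Nonempty.image_const ⟨a, ha⟩ _), csInf_singleton]

theorem setIntegral_one_add_mul_sq_div_two {E : Type*} [MeasurableSpace E] {μ : Measure E}
    {s : Set E} (hμs : μ s ≠ ⊤) {g : E → ℝ} (hg : IntegrableOn (fun x => g x ^ 2 / 2) s μ)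
    (c : ℝ) :
    ∫ x in s, (1 + (c * g x) ^ 2 / 2) ∂μ = μ.real s + (∫ x in s, g x ^ 2 / 2 ∂μ) * c ^ 2 := by
  simp_rw [mul_pow, mul_div_assoc]
  rw [integral_add (integrableOn_const (C := (1 : ℝ)) hμs) (hg.const_mul _), setIntegral_const,
    integral_const_mul, smul_eq_mul, mul_one, mul_comm (c ^ 2)]

section Symmetric

variable {E : Type*} [MeasurableSpace E] [InvolutiveNeg E] [MeasurableNeg E]
  {μ : Measure E} [μ.IsNegInvariant] {s : Set E} {g : E → ℝ}

theorem setIntegral_exp_eq_setIntegral_cosh (hs : -s = s) (hg : ∀ x, g (-x) = -g x)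
    (hint : IntegrableOn (fun x => exp (g x)) s μ) :
    ∫ x in s, exp (g x) ∂μ = ∫ x in s, cosh (g x) ∂μ := by
  have hneg := Measure.measurePreserving_neg μ
  have hemb := (MeasurableEquiv.neg E).measurableEmbedding
  have hpre : Neg.neg ⁻¹' s = s := hs
  have hint' : IntegrableOn (fun x => exp (-g x)) s μ := by
    have := (hneg.integrableOn_comp_preimage hemb).2 hint
    simpa only [hpre, Function.comp_def, hg] using this
  have hsym : ∫ x in s, exp (-g x) ∂μ = ∫ x in s, exp (g x) ∂μ := by
    simpa only [hpre, hg] using hneg.setIntegral_preimage_emb hemb (fun x => exp (g x)) s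
  simp only [cosh_eq]
  rw [integral_div, integral_add hint hint', hsym]
  ring

variable [TopologicalSpace E] [T2Space E] [OpensMeasurableSpace E] [IsFiniteMeasureOnCompacts μ]

theorem mul_setIntegral_one_add_sq_div_two_le_integral_exp_mul (hs : IsCompact s)
    (hs' : -s = s) (hgc : Continuous g) (hg : ∀ x, g (-x) = -g x) {k : E → ℝ} {k₀ : ℝ}
    (hk₀ : 0 ≤ k₀) (hk₀k : ∀ x ∈ s, k₀ ≤ k x) (hk : ∀ x, 0 ≤ k x)
    (hint : Integrable (fun x => exp (g x) * k x) μ) :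
    k₀ * ∫ x in s, (1 + g x ^ 2 / 2) ∂μ ≤ ∫ x, exp (g x) * k x ∂μ := by
  have hexp : IntegrableOn (fun x => exp (g x)) s μ :=
    (continuous_exp.comp hgc).continuousOn.integrableOn_compact hs
  calc k₀ * ∫ x in s, (1 + g x ^ 2 / 2) ∂μ
      ≤ k₀ * ∫ x in s, cosh (g x) ∂μ := by
        refine mul_le_mul_of_nonneg_left (setIntegral_mono ?_ ?_ fun x => ?_) hk₀
        · exact (continuous_const.add ((hgc.pow 2).div_const 2)).continuousOn.integrableOn_compact
            hs
        · exact (continuous_cosh.comp hgc).continuousOn.integrableOn_compact hs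
        · exact one_add_sq_div_two_le_cosh (g x)
    _ = ∫ x in s, k₀ * exp (g x) ∂μ := by
        rw [integral_const_mul, setIntegral_exp_eq_setIntegral_cosh hs' hg hexp]
    _ ≤ ∫ x in s, exp (g x) * k x ∂μ :=
        setIntegral_mono_on (hexp.const_mul k₀) hint.integrableOn hs.measurableSet fun x hx => by
          rw [mul_comm]; exact mul_le_mul_of_nonneg_left (hk₀k x hx) (exp_pos _).le
    _ ≤ ∫ x, exp (g x) * k x ∂μ :=
        setIntegral_le_integral hint (.of_forall fun x => mul_nonneg (exp_pos _).le (hk x))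

end Symmetric

section InnerProduct

variable {E : Type*} [NormedAddCommGroup E] [InnerProductSpace ℝ E] [FiniteDimensional ℝ E]
  [MeasurableSpace E] [BorelSpace E]

theorem setIntegral_closedBall_comp_inner_eq (f : ℝ → ℝ) (r : ℝ) {ξ ξ' : E} (h : ‖ξ‖ = ‖ξ'‖) :
    ∫ y in closedBall 0 r, f (inner ℝ y ξ) = ∫ y in closedBall 0 r, f (inner ℝ y ξ') := by
  set ρ := Submodule.reflection (ℝ ∙ (ξ - ξ'))ᗮ
  have hρ : ρ ξ = ξ' := Submodule.reflection_sub h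
  have hpre : ρ ⁻¹' closedBall 0 r = closedBall 0 r := by
    ext y; simp only [Set.mem_preimage, mem_closedBall_zero_iff, ρ.norm_map]
  have key := ρ.measurePreserving.setIntegral_preimage_emb ρ.toHomeomorph.measurableEmbedding
    (fun y => f (inner ℝ y ξ')) (closedBall 0 r)
  simpa only [hpre, ← hρ, ρ.inner_map_map] using key

theorem setIntegral_inner_sq_pos (μ : Measure E) [μ.IsAddHaarMeasure] {s : Set E}
    (hs : IsCompact s) (hμs : μ s ≠ 0) {ξ : E} (hξ : ξ ≠ 0) :
    0 < ∫ y in s, inner ℝ y ξ ^ 2 ∂μ := by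
  have hint : IntegrableOn (fun y => inner ℝ y ξ ^ 2) s μ :=
    ((continuous_id.inner continuous_const).pow 2).continuousOn.integrableOn_compact hs
  rw [setIntegral_pos_iff_support_of_nonneg_ae (.of_forall fun y => sq_nonneg _) hint]
  set H := LinearMap.ker (innerₛₗ ℝ ξ)
  have hH : μ H = 0 := Measure.addHaar_submodule μ H fun h =>
    hξ <| inner_self_eq_zero.1 (show ξ ∈ H from h ▸ Submodule.mem_top)
  have hsub : s \ H ⊆ Function.support (fun y => inner ℝ y ξ ^ 2) ∩ s := by
    rintro y ⟨hys, hyH⟩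
    refine ⟨pow_ne_zero 2 fun h => hyH ?_, hys⟩
    rwa [SetLike.mem_coe, LinearMap.mem_ker, innerₛₗ_apply_apply, real_inner_comm]
  calc 0 < μ s := pos_iff_ne_zero.2 hμs
    _ = μ (s \ H) := (measure_sdiff_null hH).symm
    _ ≤ _ := measure_mono hsub

end InnerProduct

theorem kernel_transform_lower_bound_general {N : ℕ} (hN : 0 < N)
    (k : EuclideanSpace ℝ (Fin N) → ℝ) (r₀ : ℝ) (hr₀ : 0 < r₀)
    (hkc : Continuous k) (hknn : ∀ z, 0 ≤ k z)
    (hkpos : ∀ z, ‖z‖ < r₀ → 0 < k z) (hkzero : ∀ z, r₀ ≤ ‖z‖ → k z = 0) :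
    0 < sInf (k '' closedBall 0 (r₀ / 2)) ∧
    0 < sInf ((fun ξ : EuclideanSpace ℝ (Fin N) =>
        sInf (k '' closedBall 0 (r₀ / 2)) *
          ∫ y in closedBall (0 : EuclideanSpace ℝ (Fin N)) (r₀ / 2),
            (inner ℝ y ξ : ℝ) ^ 2 / 2) '' {ξ | ‖ξ‖ = 1}) ∧
    ∀ ξ : EuclideanSpace ℝ (Fin N), ‖ξ‖ = 1 → ∀ μ : ℝ, 0 < μ →
      sInf (k '' closedBall 0 (r₀ / 2)) *
          (volume (closedBall (0 : EuclideanSpace ℝ (Fin N)) (r₀ / 2))).toReal +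
        sInf ((fun ξ : EuclideanSpace ℝ (Fin N) =>
          sInf (k '' closedBall 0 (r₀ / 2)) *
            ∫ y in closedBall (0 : EuclideanSpace ℝ (Fin N)) (r₀ / 2),
              (inner ℝ y ξ : ℝ) ^ 2 / 2) '' {ξ | ‖ξ‖ = 1}) * μ ^ 2 ≤
      ∫ y, Real.exp (-μ * (inner ℝ y ξ : ℝ)) * k y := by
  set B := closedBall (0 : EuclideanSpace ℝ (Fin N)) (r₀ / 2)
  set k₀ := sInf (k '' B)
  have hB : IsCompact B := isCompact_closedBall _ _
  have hk₀ : 0 < k₀ := hB.sInf_image_pos (nonempty_closedBall.2 (by positivity))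
    hkc.continuousOn fun y hy => hkpos y ((mem_closedBall_zero_iff.1 hy).trans_lt (by linarith))
  have hk₀k : ∀ y ∈ B, k₀ ≤ k y := fun y hy =>
    csInf_le (hB.image hkc).bddBelow (mem_image_of_mem k hy)
  have hm : ∀ ξ : EuclideanSpace ℝ (Fin N), ‖ξ‖ = 1 →
      sInf ((fun ξ => k₀ * ∫ y in B, inner ℝ y ξ ^ 2 / 2) '' {ξ | ‖ξ‖ = 1}) =
        k₀ * ∫ y in B, inner ℝ y ξ ^ 2 / 2 :=
    fun ξ hξ => csInf_image_eq_of_forall_eq hξ fun ξ' hξ' => by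
      rw [setIntegral_closedBall_comp_inner_eq (· ^ 2 / 2) _ (hξ'.trans hξ.symm)]
  refine ⟨hk₀, ?_, fun ξ hξ μ hμ => ?_⟩
  · obtain ⟨ξ₀, hξ₀⟩ : ∃ ξ₀ : EuclideanSpace ℝ (Fin N), ‖ξ₀‖ = 1 :=
      ⟨EuclideanSpace.single ⟨0, hN⟩ 1, by simp⟩
    rw [hm ξ₀ hξ₀, integral_div]
    refine mul_pos hk₀ (div_pos (setIntegral_inner_sq_pos _ hB ?_ ?_) two_pos)
    · exact (measure_closedBall_pos _ _ (by positivity)).ne'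
    · exact norm_ne_zero_iff.1 (by rw [hξ₀]; exact one_ne_zero)
  · have hsupp : HasCompactSupport k := HasCompactSupport.intro (isCompact_closedBall 0 r₀)
      fun y hy => hkzero y (not_le.1 (mem_closedBall_zero_iff.not.1 hy)).le
    have hg : Continuous fun y : EuclideanSpace ℝ (Fin N) => -μ * inner ℝ y ξ :=
      continuous_const.mul (continuous_id.inner continuous_const)
    have hint : Integrable fun y => exp (-μ * inner ℝ y ξ) * k y :=
      ((continuous_exp.comp hg).mul hkc).integrable_of_hasCompactSupport hsupp.mul_left
    rw [hm ξ hξ]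
    calc k₀ * volume.real B + k₀ * (∫ y in B, inner ℝ y ξ ^ 2 / 2) * μ ^ 2
        = k₀ * ∫ y in B, (1 + (-μ * inner ℝ y ξ) ^ 2 / 2) := by
          rw [setIntegral_one_add_mul_sq_div_two (g := (inner ℝ · ξ)) hB.measure_lt_top.ne
            ((((continuous_id.inner continuous_const).pow 2).div_const 2).continuousOn
              |>.integrableOn_compact hB), neg_sq]
          ring
      _ ≤ ∫ y, exp (-μ * inner ℝ y ξ) * k y :=
          mul_setIntegral_one_add_sq_div_two_le_integral_exp_mul hB
            (by rw [neg_closedBall, neg_zero]) hg (fun y => by rw [inner_neg_left]; ring)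
            hk₀.le hk₀k hknn hint

/-- lower bound `∫ e^{-μ y·ξ} k(y) dy ≥ m₀ + m μ²` for the kernel transform,
with `k₀ = inf_{‖y‖ ≤ r₀/2} k`, `m₀ = k₀ · vol(B(0, r₀/2))`,
`m = inf_{‖ξ‖=1} k₀ ∫_{‖y‖ ≤ r₀/2} (y·ξ)²/2 dy`, and `k₀ > 0`, `m > 0`. -/
theorem kernel_transform_lower_bound {N : ℕ} (hN : 0 < N)
    (k : EuclideanSpace ℝ (Fin N) → ℝ) (r₀ : ℝ) (hr₀ : 0 < r₀)
    (hkc : Continuous k) (hknn : ∀ z, 0 ≤ k z)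
    (hkpos : ∀ z, ‖z‖ < r₀ → 0 < k z) (hkzero : ∀ z, r₀ ≤ ‖z‖ → k z = 0)
    (hkint : ∫ z, k z = 1) :
    0 < sInf (k '' closedBall 0 (r₀ / 2)) ∧
    0 < sInf ((fun ξ : EuclideanSpace ℝ (Fin N) =>
        sInf (k '' closedBall 0 (r₀ / 2)) *
          ∫ y in closedBall (0 : EuclideanSpace ℝ (Fin N)) (r₀ / 2),
            (inner ℝ y ξ : ℝ) ^ 2 / 2) '' {ξ | ‖ξ‖ = 1}) ∧
    ∀ ξ : EuclideanSpace ℝ (Fin N), ‖ξ‖ = 1 → ∀ μ : ℝ, 0 < μ →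
      sInf (k '' closedBall 0 (r₀ / 2)) *
          (volume (closedBall (0 : EuclideanSpace ℝ (Fin N)) (r₀ / 2))).toReal +
        sInf ((fun ξ : EuclideanSpace ℝ (Fin N) =>
          sInf (k '' closedBall 0 (r₀ / 2)) *
            ∫ y in closedBall (0 : EuclideanSpace ℝ (Fin N)) (r₀ / 2),
              (inner ℝ y ξ : ℝ) ^ 2 / 2) '' {ξ | ‖ξ‖ = 1}) * μ ^ 2 ≤
      ∫ y, Real.exp (-μ * (inner ℝ y ξ : ℝ)) * k y :=
  kernel_transform_lower_bound_general hN k r₀ hr₀ hkc hknn hkpos hkzero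
end

section
/- With k as above, for every ξ ∈ S^{N−1} and constant a_min ∈ ℝ, the function μ ↦ (∫_{ℝ^N} e^{−μ y·ξ} k(y) dy − 1 + a_min)/μ tends to +∞ as μ → ∞. -/
open MeasureTheory Filter Real Set
open scoped RealInnerProductSpace

/-!
Pick a point `x₀` with `k x₀ > 0` and `⟪x₀, ξ⟫ < 0`, e.g. `x₀ = -(r₀/2) ξ`, and let `c > 0` be
smaller than `-⟪x₀, ξ⟫`. On the open half-space `S = {⟪y, ξ⟫ < -c}` the weight `e^{-μ ⟪y, ξ⟫}`
exceeds `e^{cμ}`, and `S` carries a positive amount `C` of mass of `k`, so the integral is at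
least `C e^{cμ}`, which beats any affine function of `μ`.
-/

theorem tendsto_const_mul_exp_add_div_atTop {C c : ℝ} (hC : 0 < C) (hc : 0 < c) (a : ℝ) :
    Tendsto (fun t => (C * exp (c * t) + a) / t) atTop atTop := by
  have hexp : Tendsto (fun t => exp (c * t) / t) atTop atTop := by
    simpa only [rpow_one] using tendsto_exp_mul_div_rpow_atTop 1 c hc
  refine ((hexp.const_mul_atTop hC).atTop_add
    (tendsto_const_nhds.div_atTop tendsto_id : Tendsto (fun t => a / t) atTop _)).congr fun t => ?_
  rw [add_div, mul_div_assoc]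

theorem isOpen_setOf_inner_lt {E : Type*} [NormedAddCommGroup E] [InnerProductSpace ℝ E] (ξ : E)
    (c : ℝ) : IsOpen {y : E | ⟪y, ξ⟫ < c} :=
  isOpen_lt (continuous_id.inner continuous_const) continuous_const

section HalfSpace

variable {E : Type*} [NormedAddCommGroup E] [InnerProductSpace ℝ E] [MeasurableSpace E]
  {μ : Measure E} {k : E → ℝ} {ξ : E}

theorem setIntegral_inner_lt_pos [μ.IsOpenPosMeasure] (hkc : Continuous k) (hk : 0 ≤ k)
    (hki : Integrable k μ) {x₀ : E} {c : ℝ} (hx₀ : 0 < k x₀) (hx₀ξ : ⟪x₀, ξ⟫ < c) :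
    0 < ∫ y in {y | ⟪y, ξ⟫ < c}, k y ∂μ := by
  rw [setIntegral_pos_iff_support_of_nonneg_ae (ae_of_all _ hk) hki.integrableOn]
  exact ((isOpen_ne_fun hkc continuous_const).inter (isOpen_setOf_inner_lt ξ c)).measure_pos μ
    ⟨x₀, hx₀.ne', hx₀ξ⟩

variable [OpensMeasurableSpace E]

theorem setIntegral_inner_lt_mul_exp_le_integral (hk : 0 ≤ k) (hki : Integrable k μ) {c t : ℝ}
    (ht : 0 ≤ t) (hint : Integrable (fun y => exp (-t * ⟪y, ξ⟫) * k y) μ) :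
    (∫ y in {y | ⟪y, ξ⟫ < -c}, k y ∂μ) * exp (c * t) ≤ ∫ y, exp (-t * ⟪y, ξ⟫) * k y ∂μ := by
  have hweight : ∀ y ∈ {y | ⟪y, ξ⟫ < -c}, k y * exp (c * t) ≤ exp (-t * ⟪y, ξ⟫) * k y :=
    fun y hy => by
      rw [mul_comm]
      exact mul_le_mul_of_nonneg_right (exp_le_exp.mpr (by nlinarith [hy.out])) (hk y)
  calc (∫ y in {y | ⟪y, ξ⟫ < -c}, k y ∂μ) * exp (c * t)
      = ∫ y in {y | ⟪y, ξ⟫ < -c}, k y * exp (c * t) ∂μ := (integral_mul_const _ _).symm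
    _ ≤ ∫ y in {y | ⟪y, ξ⟫ < -c}, exp (-t * ⟪y, ξ⟫) * k y ∂μ :=
      setIntegral_mono_on (hki.integrableOn.mul_const _) hint.integrableOn
        (isOpen_setOf_inner_lt ξ _).measurableSet hweight
    _ ≤ ∫ y, exp (-t * ⟪y, ξ⟫) * k y ∂μ :=
      setIntegral_le_integral hint (ae_of_all _ fun y => mul_nonneg (exp_pos _).le (hk y))

theorem tendsto_integral_exp_inner_mul_add_div_atTop [μ.IsOpenPosMeasure]
    [IsFiniteMeasureOnCompacts μ] (hkc : Continuous k) (hks : HasCompactSupport k) (hk : 0 ≤ k)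
    {x₀ : E} (hx₀ : 0 < k x₀) (hx₀ξ : ⟪x₀, ξ⟫ < 0) (a : ℝ) :
    Tendsto (fun t => ((∫ y, exp (-t * ⟪y, ξ⟫) * k y ∂μ) + a) / t) atTop atTop := by
  obtain ⟨c, hc, hx₀c⟩ : ∃ c : ℝ, 0 < c ∧ ⟪x₀, ξ⟫ < -c := ⟨-⟪x₀, ξ⟫ / 2, by linarith, by linarith⟩
  have hki : Integrable k μ := hkc.integrable_of_hasCompactSupport hks
  have hint : ∀ t : ℝ, Integrable (fun y => exp (-t * ⟪y, ξ⟫) * k y) μ := fun t =>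
    (by fun_prop : Continuous fun y => exp (-t * ⟪y, ξ⟫) * k y).integrable_of_hasCompactSupport
      hks.mul_left
  have hC := setIntegral_inner_lt_pos (μ := μ) hkc hk hki hx₀ hx₀c
  refine tendsto_atTop_mono' _ ?_ (tendsto_const_mul_exp_add_div_atTop hC hc a)
  filter_upwards [eventually_gt_atTop 0] with t ht
  gcongr
  exact setIntegral_inner_lt_mul_exp_le_integral hk hki ht.le (hint t)

end HalfSpace

theorem kernel_quotient_tendsto_atTop_general {N : ℕ}
    (k : EuclideanSpace ℝ (Fin N) → ℝ) (r₀ : ℝ) (hr₀ : 0 < r₀)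
    (hkc : Continuous k) (hknn : ∀ z, 0 ≤ k z)
    (hkpos : ∀ z, ‖z‖ < r₀ → 0 < k z) (hkzero : ∀ z, r₀ ≤ ‖z‖ → k z = 0)
    (ξ : EuclideanSpace ℝ (Fin N)) (hξ : ‖ξ‖ = 1) (amin : ℝ) :
    Tendsto (fun μ : ℝ =>
        ((∫ y, Real.exp (-μ * (inner ℝ y ξ : ℝ)) * k y) - 1 + amin) / μ) atTop atTop := by
  have hks : HasCompactSupport k :=
    .intro (isCompact_closedBall 0 r₀) fun z hz => hkzero z (not_le.mp (by simpa using hz)).le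
  set x₀ := (-(r₀ / 2)) • ξ
  have hx₀ : 0 < k x₀ := hkpos x₀ <| by
    simpa only [x₀, neg_smul, norm_neg, norm_smul, norm_div, norm_eq_abs, abs_of_pos hr₀,
      abs_two, hξ, mul_one, half_lt_self_iff] using hr₀
  have hx₀ξ : ⟪x₀, ξ⟫ < 0 := by
    simp only [x₀, real_inner_smul_left, real_inner_self_eq_norm_sq, hξ]
    linarith
  simpa only [sub_add_eq_add_sub, add_sub_assoc] using
    tendsto_integral_exp_inner_mul_add_div_atTop hkc hks hknn hx₀ hx₀ξ (amin - 1)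

/-- `(∫ e^{-μ y·ξ} k(y) dy - 1 + a_min)/μ → +∞` as `μ → ∞`. -/
theorem kernel_quotient_tendsto_atTop {N : ℕ} (hN : 0 < N)
    (k : EuclideanSpace ℝ (Fin N) → ℝ) (r₀ : ℝ) (hr₀ : 0 < r₀)
    (hkc : Continuous k) (hknn : ∀ z, 0 ≤ k z)
    (hkpos : ∀ z, ‖z‖ < r₀ → 0 < k z) (hkzero : ∀ z, r₀ ≤ ‖z‖ → k z = 0)
    (hkint : ∫ z, k z = 1)
    (ξ : EuclideanSpace ℝ (Fin N)) (hξ : ‖ξ‖ = 1) (amin : ℝ) :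
    Tendsto (fun μ : ℝ =>
        ((∫ y, Real.exp (-μ * (inner ℝ y ξ : ℝ)) * k y) - 1 + amin) / μ) atTop atTop :=
  kernel_quotient_tendsto_atTop_general k r₀ hr₀ hkc hknn hkpos hkzero ξ hξ amin
end

section
/- (Comparison principle for a nonlocal linear equation.) Let u₁, u₂ be continuous functions on [0,T)×ℝ^N, differentiable in t, such that u₁ is a sub-solution and u₂ a super-solution of ∂u/∂t = ∫ e^{−μ(y−x)·ξ}k(y−x)u(t,y)dy − u(t,x) + a(t,x)u(t,x), with u₁(0,·) ≤ u₂(0,·) and u₂ − u₁ ≥ −β₀ on [0,T)×ℝ^N for some β₀ > 0. Then u₁(t,·) ≤ u₂(t,·) for all t ∈ [0,T). -/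
open MeasureTheory Set

/-!
Put `w = u₂ - u₁`, so that `∂ₜw ≥ ∫ J(x, y) w(t, y) dy - w + a w` with the nonnegative kernel
`J(x, y) = e^{-μ(y-x)·ξ} k(y - x)`, and let `K = ∫ J(x, ·) + sup |a|`. At a point where `w < 0`
and `w(t, ·) ≥ -φ`, the right-hand side is at least `-K φ`. Starting from `w ≥ -β₀`, a fencing
argument in `t` then upgrades the bound `w ≥ -β₀ (K t)ⁿ / n!` to the next `n`, and letting
`n → ∞` gives `w ≥ 0`.
-/

theorem image_le_of_deriv_right_le_deriv_where_gt {f f' G g : ℝ → ℝ} {a b : ℝ}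
    (hf : ContinuousOn f (Icc a b)) (hf' : ∀ x ∈ Ico a b, HasDerivWithinAt f (f' x) (Ici x) x)
    (ha : f a ≤ G a) (hG : ∀ x, HasDerivAt G (g x) x)
    (bound : ∀ x ∈ Ico a b, G x < f x → f' x ≤ g x) : ∀ ⦃x⦄, x ∈ Icc a b → f x ≤ G x := by
  intro x hx
  have hpos : 0 < 1 + (x - a) := by linarith [hx.1]
  -- Fence with `G + ε (1 + (· - a))`, which lies strictly above `G` on `[a, b]`.
  have fence : ∀ ε > 0, f x ≤ G x + ε * (1 + (x - a)) := fun ε hε => by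
    refine image_le_of_deriv_right_lt_deriv_boundary hf hf'
      (B := fun y => G y + ε * (1 + (y - a))) (B' := fun y => g y + ε)
      (by simpa using ha.trans (le_add_of_nonneg_right hε.le)) (fun y => ?_)
      (fun y hy hfy => ?_) hx
    · exact ((hG y).add ((((hasDerivAt_id' y).sub_const a).const_add 1).const_mul ε)).congr_deriv
        (by ring)
    · have : G y < f y := by rw [hfy]; nlinarith [hy.1]
      linarith [bound y hy this]
  refine le_of_forall_pos_le_add fun δ hδ => ?_
  simpa [div_mul_cancel₀ δ hpos.ne'] using fence (δ / (1 + (x - a))) (by positivity)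

theorem hasDerivAt_mul_pow_succ_div_factorial (K s : ℝ) (n : ℕ) :
    HasDerivAt (fun y => (K * y) ^ (n + 1) / (n + 1).factorial)
      (K * ((K * s) ^ n / n.factorial)) s := by
  refine ((((hasDerivAt_id' s).const_mul K).pow (n + 1)).div_const _).congr_deriv ?_
  rw [Nat.factorial_succ]
  push_cast
  field_simp

section Iteration

variable {X : Type*} {w w' : ℝ → X → ℝ} {T β K : ℝ}

theorem neg_mul_pow_div_factorial_le_of_deriv (hβ : 0 ≤ β) (hK : 0 ≤ K)
    (hw' : ∀ x, ∀ t ∈ Ico 0 T, HasDerivWithinAt (fun s => w s x) (w' t x) (Ico 0 T) t)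
    (h0 : ∀ x, 0 ≤ w 0 x) (hlb : ∀ t ∈ Ico 0 T, ∀ x, -β ≤ w t x)
    (step : ∀ t ∈ Ico 0 T, ∀ φ, (∀ y, -φ ≤ w t y) → ∀ x, w t x < 0 → -(K * φ) ≤ w' t x)
    (n : ℕ) : ∀ t ∈ Ico 0 T, ∀ x, -(β * ((K * t) ^ n / n.factorial)) ≤ w t x := by
  induction n with
  | zero => simpa using hlb
  | succ n ih =>
    intro t ht x
    have hsub : Icc 0 t ⊆ Ico 0 T := fun s hs => ⟨hs.1, hs.2.trans_lt ht.2⟩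
    suffices -w t x ≤ β * ((K * t) ^ (n + 1) / (n + 1).factorial) by linarith
    refine image_le_of_deriv_right_le_deriv_where_gt (f' := fun s => -w' s x)
      (g := fun s => K * (β * ((K * s) ^ n / n.factorial)))
      (fun s hs => ((hw' x s (hsub hs)).continuousWithinAt).neg.mono hsub)
      (fun s hs => ?_) (by simpa using h0 x)
      (fun s => ((hasDerivAt_mul_pow_succ_div_factorial K s n).const_mul β).congr_deriv (by ring))
      (fun s hs hlt => ?_) (right_mem_Icc.2 ht.1)
    · exact (hw' x s (hsub (Ico_subset_Icc_self hs))).neg.mono_of_mem_nhdsWithin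
        (Filter.mem_of_superset (Ico_mem_nhdsGE (hs.2.trans ht.2)) (Ico_subset_Ico_left hs.1))
    · have hs : s ∈ Ico 0 T := hsub (Ico_subset_Icc_self hs)
      have : 0 ≤ β * ((K * s) ^ (n + 1) / (n + 1).factorial) := by
        have := hs.1; positivity
      have hlt : β * ((K * s) ^ (n + 1) / (n + 1).factorial) < -w s x := hlt
      have := step s hs _ (ih s hs) x (by linarith)
      linarith

theorem nonneg_of_deriv_ge_neg_mul_lowerBound (hβ : 0 ≤ β) (hK : 0 ≤ K)
    (hw' : ∀ x, ∀ t ∈ Ico 0 T, HasDerivWithinAt (fun s => w s x) (w' t x) (Ico 0 T) t)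
    (h0 : ∀ x, 0 ≤ w 0 x) (hlb : ∀ t ∈ Ico 0 T, ∀ x, -β ≤ w t x)
    (step : ∀ t ∈ Ico 0 T, ∀ φ, (∀ y, -φ ≤ w t y) → ∀ x, w t x < 0 → -(K * φ) ≤ w' t x) :
    ∀ t ∈ Ico 0 T, ∀ x, 0 ≤ w t x := fun t ht x => by
  have hlim := ((FloorSemiring.tendsto_pow_div_factorial_atTop (K * t)).const_mul β).neg
  rw [mul_zero, neg_zero] at hlim
  exact le_of_tendsto' hlim fun n =>
    neg_mul_pow_div_factorial_le_of_deriv hβ hK hw' h0 hlb step n t ht x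

end Iteration

theorem nonneg_of_nonlocal_supersolution {X : Type*} [MeasurableSpace X] {ν : Measure X}
    {J : X → X → ℝ} {a w w' : ℝ → X → ℝ} {T β L C : ℝ}
    (hJ : ∀ x y, 0 ≤ J x y) (hJi : ∀ x, Integrable (J x) ν) (hJL : ∀ x, ∫ y, J x y ∂ν ≤ L)
    (hL : 0 ≤ L) (ha : ∀ t x, |a t x| ≤ C) (hC : 0 ≤ C) (hβ : 0 ≤ β)
    (hJw : ∀ t ∈ Ico 0 T, ∀ x, Integrable (fun y => J x y * w t y) ν)
    (hw' : ∀ x, ∀ t ∈ Ico 0 T, HasDerivWithinAt (fun s => w s x) (w' t x) (Ico 0 T) t)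
    (hsup : ∀ t ∈ Ico 0 T, ∀ x, ∫ y, J x y * w t y ∂ν - w t x + a t x * w t x ≤ w' t x)
    (h0 : ∀ x, 0 ≤ w 0 x) (hlb : ∀ t ∈ Ico 0 T, ∀ x, -β ≤ w t x) :
    ∀ t ∈ Ico 0 T, ∀ x, 0 ≤ w t x := by
  refine nonneg_of_deriv_ge_neg_mul_lowerBound hβ (add_nonneg hL hC) hw' h0 hlb
    fun t ht φ hφ x hx => ?_
  have hφ0 : 0 ≤ φ := by linarith [hφ x]
  have nonlocal : -(L * φ) ≤ ∫ y, J x y * w t y ∂ν := calc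
    -(L * φ) ≤ -((∫ y, J x y ∂ν) * φ) := neg_le_neg (mul_le_mul_of_nonneg_right (hJL x) hφ0)
    _ = ∫ y, J x y * -φ ∂ν := by rw [integral_mul_const]; ring
    _ ≤ ∫ y, J x y * w t y ∂ν := integral_mono ((hJi x).mul_const _) (hJw t ht x)
      fun y => mul_le_mul_of_nonneg_left (hφ y) (hJ x y)
  have reaction : -(C * φ) ≤ a t x * w t x := by
    have : |a t x * w t x| ≤ C * φ := by
      rw [abs_mul, abs_of_neg hx]
      exact mul_le_mul (ha t x) (by linarith [hφ x]) (by linarith) hC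
    linarith [neg_abs_le (a t x * w t x)]
  linarith [hsup t ht x]

theorem integrable_comp_sub_right_mul {E : Type*} [NormedAddCommGroup E] [MeasurableSpace E]
    [BorelSpace E] {μ : Measure E} [IsFiniteMeasureOnCompacts μ] {F g : E → ℝ}
    (hF : Continuous F) (hFs : HasCompactSupport F) (hg : Continuous g) (x : E) :
    Integrable (fun y => F (y - x) * g y) μ :=
  ((hF.comp (continuous_sub_right x)).mul hg).integrable_of_hasCompactSupport
    (hFs.comp_homeomorph (Homeomorph.subRight x)).mul_right

theorem comparison_principle_linear_general {N : ℕ}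
    (ξ : EuclideanSpace ℝ (Fin N)) (μ : ℝ)
    (k : EuclideanSpace ℝ (Fin N) → ℝ) (r₀ : ℝ)
    (hkc : Continuous k) (hknn : ∀ z, 0 ≤ k z)
    (hkzero : ∀ z, r₀ ≤ ‖z‖ → k z = 0)
    (T : ℝ)
    (a : ℝ → EuclideanSpace ℝ (Fin N) → ℝ)
    (hab : ∃ C : ℝ, ∀ t x, |a t x| ≤ C)
    (u₁ u₂ u₁' u₂' : ℝ → EuclideanSpace ℝ (Fin N) → ℝ)
    (hc₁ : ContinuousOn (fun q : ℝ × EuclideanSpace ℝ (Fin N) => u₁ q.1 q.2)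
      (Set.Ico 0 T ×ˢ Set.univ))
    (hc₂ : ContinuousOn (fun q : ℝ × EuclideanSpace ℝ (Fin N) => u₂ q.1 q.2)
      (Set.Ico 0 T ×ˢ Set.univ))
    (hd₁ : ∀ x, ∀ t ∈ Set.Ico (0 : ℝ) T,
      HasDerivWithinAt (fun s => u₁ s x) (u₁' t x) (Set.Ico 0 T) t)
    (hd₂ : ∀ x, ∀ t ∈ Set.Ico (0 : ℝ) T,
      HasDerivWithinAt (fun s => u₂ s x) (u₂' t x) (Set.Ico 0 T) t)
    (hsub : ∀ t ∈ Set.Ico (0 : ℝ) T, ∀ x, u₁' t x ≤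
      (∫ y, Real.exp (-μ * (inner ℝ (y - x) ξ : ℝ)) * k (y - x) * u₁ t y) -
        u₁ t x + a t x * u₁ t x)
    (hsup : ∀ t ∈ Set.Ico (0 : ℝ) T, ∀ x,
      (∫ y, Real.exp (-μ * (inner ℝ (y - x) ξ : ℝ)) * k (y - x) * u₂ t y) -
        u₂ t x + a t x * u₂ t x ≤ u₂' t x)
    (hinit : ∀ x, u₁ 0 x ≤ u₂ 0 x)
    (β₀ : ℝ) (hβ₀ : 0 < β₀)
    (hlb : ∀ t ∈ Set.Ico (0 : ℝ) T, ∀ x, -β₀ ≤ u₂ t x - u₁ t x) :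
    ∀ t ∈ Set.Ico (0 : ℝ) T, ∀ x, u₁ t x ≤ u₂ t x := by
  obtain ⟨C, hC⟩ := hab
  set F : EuclideanSpace ℝ (Fin N) → ℝ := fun z => Real.exp (-μ * inner ℝ z ξ) * k z
  have hFc : Continuous F := by fun_prop
  have hFnn : ∀ z, 0 ≤ F z := fun z => mul_nonneg (Real.exp_pos _).le (hknn z)
  have hks : HasCompactSupport k := .intro (isCompact_closedBall 0 r₀) fun z hz =>
    hkzero z (not_le.1 (by simpa using hz)).le
  have hFs : HasCompactSupport F := hks.mul_left
  have hFu : ∀ u : ℝ → EuclideanSpace ℝ (Fin N) → ℝ,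
      ContinuousOn (fun q : ℝ × EuclideanSpace ℝ (Fin N) => u q.1 q.2) (Ico 0 T ×ˢ univ) →
      ∀ t ∈ Ico 0 T, ∀ x, Integrable (fun y => F (y - x) * u t y) :=
    fun u hu t ht => integrable_comp_sub_right_mul hFc hFs
      (hu.comp_continuous (.prodMk_right t) fun _ => ⟨ht, trivial⟩)
  have hsup_w : ∀ t ∈ Ico 0 T, ∀ x, (∫ y, F (y - x) * (u₂ t y - u₁ t y)) - (u₂ t x - u₁ t x) +
      a t x * (u₂ t x - u₁ t x) ≤ u₂' t x - u₁' t x := fun t ht x => by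
    simp only [mul_sub]
    rw [integral_sub (hFu u₂ hc₂ t ht x) (hFu u₁ hc₁ t ht x)]
    linarith [hsub t ht x, hsup t ht x]
  exact fun t ht x => sub_nonneg.1 <| nonneg_of_nonlocal_supersolution
    (w := fun t y => u₂ t y - u₁ t y) (w' := fun t y => u₂' t y - u₁' t y)
    (fun _ _ => hFnn _) (fun x => (hFc.integrable_of_hasCompactSupport hFs).comp_sub_right x)
    (fun x => (integral_sub_right_eq_self F x).le) (integral_nonneg hFnn) hC
    ((abs_nonneg _).trans (hC 0 0)) hβ₀.le
    (fun t ht x => by simp only [mul_sub]; exact (hFu u₂ hc₂ t ht x).sub (hFu u₁ hc₁ t ht x))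
    (fun x t ht => (hd₂ x t ht).sub (hd₁ x t ht)) hsup_w (fun x => sub_nonneg.2 (hinit x))
    hlb t ht x

/-- Comparison principle for the linear nonlocal equation
`∂u/∂t = ∫ e^{-μ(y-x)·ξ} k(y-x) u(t,y) dy - u + a(t,x) u`: if `u₁` is a sub-solution and
`u₂` a super-solution on `[0,T)` with `u₁(0,·) ≤ u₂(0,·)` and `u₂ - u₁ ≥ -β₀`,
then `u₁(t,·) ≤ u₂(t,·)` for all `t ∈ [0,T)`. -/
theorem comparison_principle_linear {N : ℕ}
    (ξ : EuclideanSpace ℝ (Fin N)) (hξ : ‖ξ‖ = 1) (μ : ℝ)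
    (k : EuclideanSpace ℝ (Fin N) → ℝ) (r₀ : ℝ) (hr₀ : 0 < r₀)
    (hkc : Continuous k) (hknn : ∀ z, 0 ≤ k z)
    (hkpos : ∀ z, ‖z‖ < r₀ → 0 < k z) (hkzero : ∀ z, r₀ ≤ ‖z‖ → k z = 0)
    (hkint : ∫ z, k z = 1)
    (T : ℝ) (hT : 0 < T) (p : Fin N → ℝ) (hp : ∀ i, 0 < p i)
    (a : ℝ → EuclideanSpace ℝ (Fin N) → ℝ)
    (hac : Continuous fun q : ℝ × EuclideanSpace ℝ (Fin N) => a q.1 q.2)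
    (hab : ∃ C : ℝ, ∀ t x, |a t x| ≤ C)
    (haT : ∀ t x, a (t + T) x = a t x)
    (hap : ∀ t x i, a t (x + p i • EuclideanSpace.single i (1 : ℝ)) = a t x)
    (u₁ u₂ u₁' u₂' : ℝ → EuclideanSpace ℝ (Fin N) → ℝ)
    (hc₁ : ContinuousOn (fun q : ℝ × EuclideanSpace ℝ (Fin N) => u₁ q.1 q.2)
      (Set.Ico 0 T ×ˢ Set.univ))
    (hc₂ : ContinuousOn (fun q : ℝ × EuclideanSpace ℝ (Fin N) => u₂ q.1 q.2)
      (Set.Ico 0 T ×ˢ Set.univ))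
    (hc₁' : ContinuousOn (fun q : ℝ × EuclideanSpace ℝ (Fin N) => u₁' q.1 q.2)
      (Set.Ico 0 T ×ˢ Set.univ))
    (hc₂' : ContinuousOn (fun q : ℝ × EuclideanSpace ℝ (Fin N) => u₂' q.1 q.2)
      (Set.Ico 0 T ×ˢ Set.univ))
    (hd₁ : ∀ x, ∀ t ∈ Set.Ico (0 : ℝ) T,
      HasDerivWithinAt (fun s => u₁ s x) (u₁' t x) (Set.Ico 0 T) t)
    (hd₂ : ∀ x, ∀ t ∈ Set.Ico (0 : ℝ) T,
      HasDerivWithinAt (fun s => u₂ s x) (u₂' t x) (Set.Ico 0 T) t)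
    (hsub : ∀ t ∈ Set.Ico (0 : ℝ) T, ∀ x, u₁' t x ≤
      (∫ y, Real.exp (-μ * (inner ℝ (y - x) ξ : ℝ)) * k (y - x) * u₁ t y) -
        u₁ t x + a t x * u₁ t x)
    (hsup : ∀ t ∈ Set.Ico (0 : ℝ) T, ∀ x,
      (∫ y, Real.exp (-μ * (inner ℝ (y - x) ξ : ℝ)) * k (y - x) * u₂ t y) -
        u₂ t x + a t x * u₂ t x ≤ u₂' t x)
    (hinit : ∀ x, u₁ 0 x ≤ u₂ 0 x)
    (β₀ : ℝ) (hβ₀ : 0 < β₀)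
    (hlb : ∀ t ∈ Set.Ico (0 : ℝ) T, ∀ x, -β₀ ≤ u₂ t x - u₁ t x) :
    ∀ t ∈ Set.Ico (0 : ℝ) T, ∀ x, u₁ t x ≤ u₂ t x :=
  comparison_principle_linear_general ξ μ k r₀ hkc hknn hkzero T a hab u₁ u₂ u₁' u₂' hc₁ hc₂ hd₁ hd₂
    hsub hsup hinit β₀ hβ₀ hlb
end

section
/- (Strong monotonicity on periodic functions.) Let Φ(t) denote the solution operator of the linear nonlocal equation ∂u/∂t = ∫ e^{−μ(y−x)·ξ}k(y−x)u(t,y)dy − u + a(t,x)u restricted to the space X_p of continuous spatially periodic functions. If u₁, u₂ ∈ X_p with u₁ ≤ u₂ and u₁ ≠ u₂, then (Φ(t)u₂)(x) − (Φ(t)u₁)(x) > 0 for every x ∈ ℝ^N and every t > 0. -/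
/-!
The difference `u₂ - u₁`, multiplied by `exp ((C + 1) t)`, solves a linear equation
`∂ₜw = ∫ ρ (y - x) w(t, y) dy + c w` with `ρ ≥ 0` and `c ≥ 0`.

Nonnegativity: by periodicity `M t = sup_x (w t x)⁻` is a supremum over a compact period cell,
hence continuous, and integrating the equation gives `M t ≤ (∫ ρ + sup c) ∫₀ᵗ M`; Grönwall forces `M = 0`.

Strict positivity: once `w ≥ 0`, each `t ↦ w t x` is nondecreasing. A zero at `(t, x)` therefore
forces `w s x = 0` for `s < t`, so `∫ ρ (y - x) w(s, y) dy = 0` and `w s` vanishes on the ball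
of radius `r₀` around `x`; letting `s → t`, the zero set of `w t` is open, as well as closed,
hence all of `ℝᴺ`, contradicting `w 0 ≠ 0`.
-/

open MeasureTheory Set Filter Topology Function Metric

theorem Function.Periodic.sum_zsmul {ι α β : Type*} [AddCommGroup α] {f : α → β}
    {s : Finset ι} {v : ι → α} (h : ∀ i ∈ s, Periodic f (v i)) (m : ι → ℤ) :
    Periodic f (∑ i ∈ s, m i • v i) :=
  Finset.sum_induction _ (Periodic f) (fun _ _ => Periodic.add_period) (fun x => by simp)
    fun i hi => (h i hi).zsmul (m i)

theorem EuclideanSpace.exists_isCompact_image_eq_range_of_periodic {N : ℕ} {β : Type*}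
    {p : Fin N → ℝ} (hp : ∀ i, 0 < p i) :
    ∃ K : Set (EuclideanSpace ℝ (Fin N)), IsCompact K ∧
      ∀ f : EuclideanSpace ℝ (Fin N) → β,
        (∀ i, Periodic f (p i • EuclideanSpace.single i 1)) → f '' K = range f := by
  refine ⟨(EuclideanSpace.equiv (Fin N) ℝ).symm '' Icc 0 p,
    isCompact_Icc.image (EuclideanSpace.equiv (Fin N) ℝ).symm.continuous, fun f hf => ?_⟩
  refine (image_subset_range f _).antisymm ?_
  rintro _ ⟨y, rfl⟩
  set m : Fin N → ℤ := fun i => -toIcoDiv (hp i) 0 (y i)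
  have hy : y + ∑ i, m i • (p i • EuclideanSpace.single i 1) =
      (EuclideanSpace.equiv (Fin N) ℝ).symm fun j => toIcoMod (hp j) 0 (y j) := by
    ext j
    simp [m, Pi.single_apply, mul_comm, ← self_sub_toIcoDiv_zsmul, sub_eq_add_neg]
  refine ⟨_, ⟨_, ?_, hy.symm⟩, (Periodic.sum_zsmul (fun i _ => hf i) m) y⟩
  exact ⟨fun j => (toIcoMod_mem_Ico' (hp j) (y j)).1,
    fun j => (toIcoMod_mem_Ico' (hp j) (y j)).2.le⟩

section Nonlocal

variable {E : Type*} [NormedAddCommGroup E] {ρ φ ψ : E → ℝ}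

theorem hasCompactSupport_comp_sub_mul (hρc : HasCompactSupport ρ) (φ : E → ℝ) (x : E) :
    HasCompactSupport fun y => ρ (y - x) * φ y :=
  (hρc.comp_homeomorph (Homeomorph.subRight x)).mul_right

variable [MeasureSpace E]

noncomputable def nonlocalOp (ρ φ : E → ℝ) (x : E) : ℝ :=
  ∫ y, ρ (y - x) * φ y

theorem nonlocalOp_const_mul (c : ℝ) (x : E) :
    nonlocalOp ρ (fun y => c * φ y) x = c * nonlocalOp ρ φ x := by
  simp only [nonlocalOp, ← integral_const_mul]
  congr 1 with y
  ring

theorem nonlocalOp_nonneg (hρ0 : ∀ z, 0 ≤ ρ z) (hφ0 : ∀ y, 0 ≤ φ y) (x : E) :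
    0 ≤ nonlocalOp ρ φ x :=
  integral_nonneg fun y => mul_nonneg (hρ0 _) (hφ0 y)

variable [BorelSpace E] [(volume : Measure E).IsAddHaarMeasure]

theorem integrable_comp_sub_mul (hρ : Continuous ρ) (hρc : HasCompactSupport ρ)
    (hφ : Continuous φ) (x : E) : Integrable fun y => ρ (y - x) * φ y :=
  ((hρ.comp (continuous_sub_right x)).mul hφ).integrable_of_hasCompactSupport
    (hasCompactSupport_comp_sub_mul hρc φ x)

theorem nonlocalOp_sub (hρ : Continuous ρ) (hρc : HasCompactSupport ρ) (hφ : Continuous φ)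
    (hψ : Continuous ψ) (x : E) :
    nonlocalOp ρ (fun y => φ y - ψ y) x = nonlocalOp ρ φ x - nonlocalOp ρ ψ x := by
  simp only [nonlocalOp, mul_sub]
  exact integral_sub (integrable_comp_sub_mul hρ hρc hφ x) (integrable_comp_sub_mul hρ hρc hψ x)

theorem neg_mul_integral_le_nonlocalOp (hρ : Continuous ρ) (hρc : HasCompactSupport ρ)
    (hρ0 : ∀ z, 0 ≤ ρ z) (hφ : Continuous φ) {m : ℝ} (hφm : ∀ y, -m ≤ φ y) (x : E) :
    -(m * ∫ z, ρ z) ≤ nonlocalOp ρ φ x := by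
  calc -(m * ∫ z, ρ z) = ∫ y, ρ (y - x) * -m := by
        rw [integral_mul_const, integral_sub_right_eq_self ρ x]; ring
    _ ≤ nonlocalOp ρ φ x :=
        integral_mono (integrable_comp_sub_mul hρ hρc continuous_const x)
          (integrable_comp_sub_mul hρ hρc hφ x)
          fun y => mul_le_mul_of_nonneg_left (hφm y) (hρ0 _)

theorem eq_zero_on_ball_of_nonlocalOp_eq_zero (hρ : Continuous ρ) (hρc : HasCompactSupport ρ)
    (hρ0 : ∀ z, 0 ≤ ρ z) {r : ℝ} (hρr : ∀ z, ‖z‖ < r → 0 < ρ z) (hφ : Continuous φ)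
    (hφ0 : ∀ y, 0 ≤ φ y) {x : E} (hx : nonlocalOp ρ φ x = 0) : ∀ y ∈ ball x r, φ y = 0 := by
  intro y hy
  by_contra hne
  have hpos : 0 < ρ (y - x) * φ y :=
    mul_pos (hρr _ (mem_ball_iff_norm.mp hy)) ((hφ0 y).lt_of_ne' hne)
  exact hx.not_gt (Continuous.integral_pos_of_hasCompactSupport_nonneg_nonzero
    ((hρ.comp (continuous_sub_right x)).mul hφ) (hasCompactSupport_comp_sub_mul hρc φ x)
    (fun y => mul_nonneg (hρ0 _) (hφ0 y)) hpos.ne')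

end Nonlocal

theorem eq_zero_of_le_mul_intervalIntegral {M : ℝ → ℝ} {K : ℝ} (hM : Continuous M)
    (hM0 : ∀ s, 0 ≤ s → 0 ≤ M s) (hMK : ∀ s, 0 ≤ s → M s ≤ K * ∫ r in (0)..s, M r)
    {s : ℝ} (hs : 0 ≤ s) : M s = 0 := by
  set G : ℝ → ℝ := fun s => ∫ r in (0)..s, M r
  have hG : ∀ s, HasDerivAt G (M s) s := fun s => hM.integral_hasStrictDerivAt 0 s |>.hasDerivAt
  have hG0 : ∀ s, 0 ≤ s → 0 ≤ G s := fun s hs =>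
    intervalIntegral.integral_nonneg hs fun r hr => hM0 r hr.1
  have hGs : G s = 0 :=
    eq_zero_of_abs_deriv_le_mul_abs_self_of_eq_zero_right
      (fun r _ => (hG r).continuousAt.continuousWithinAt)
      (fun r _ => (hG r).hasDerivWithinAt) intervalIntegral.integral_same
      (fun r hr => by
        rw [Real.norm_of_nonneg (hM0 r hr.1), Real.norm_of_nonneg (hG0 r hr.1)]
        exact hMK r hr.1) s ⟨hs, le_rfl⟩
  exact le_antisymm (by simpa [G, hGs] using hMK s hs) (hM0 s hs)

section TimeSlices

variable {X : Type*} [TopologicalSpace X] {w : ℝ → X → ℝ}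

theorem continuous_max_zero_of_continuousOn_Ici_prod
    (hw : ContinuousOn (fun q : ℝ × X => w q.1 q.2) (Ici 0 ×ˢ univ)) :
    Continuous fun q : ℝ × X => w (max q.1 0) q.2 :=
  hw.comp_continuous ((continuous_fst.max continuous_const).prodMk continuous_snd)
    fun q => ⟨le_max_right q.1 0, trivial⟩

theorem continuous_of_continuousOn_Ici_prod
    (hw : ContinuousOn (fun q : ℝ × X => w q.1 q.2) (Ici 0 ×ˢ univ)) {t : ℝ} (ht : 0 ≤ t) :
    Continuous (w t) :=
  hw.comp_continuous (continuous_const.prodMk continuous_id) fun _ => ⟨ht, trivial⟩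

theorem continuousOn_Ici_of_continuousOn_Ici_prod
    (hw : ContinuousOn (fun q : ℝ × X => w q.1 q.2) (Ici 0 ×ˢ univ)) (x : X) :
    ContinuousOn (fun s => w s x) (Ici 0) :=
  hw.comp (continuous_id.prodMk continuous_const).continuousOn fun _ hs => ⟨hs, trivial⟩

theorem exists_continuous_sup_negPart
    (hw : ContinuousOn (fun q : ℝ × X => w q.1 q.2) (Ici 0 ×ˢ univ)) {K : Set X}
    (hK : IsCompact K) (hKw : ∀ t, 0 ≤ t → range (w t) ⊆ w t '' K) :
    ∃ M : ℝ → ℝ, Continuous M ∧ (∀ s, 0 ≤ M s) ∧ (∀ s, 0 ≤ s → ∀ y, -M s ≤ w s y) ∧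
      ∀ s, 0 ≤ s → ∀ {B}, 0 ≤ B → (∀ y, -w s y ≤ B) → M s ≤ B := by
  have hwc := continuous_max_zero_of_continuousOn_Ici_prod hw
  refine ⟨fun s => max 0 (sSup ((fun y => -w (max s 0) y) '' K)),
    continuous_const.max (hK.continuous_sSup hwc.neg), fun s => le_max_left _ _,
    fun s hs y => ?_, fun s hs B hB hwB => max_le hB (Real.sSup_le ?_ hB)⟩
  · obtain ⟨y', hy'K, hy'⟩ := hKw s hs (mem_range_self y)
    have hbdd : BddAbove ((fun y => -w (max s 0) y) '' K) :=
      hK.bddAbove_image (hwc.comp (Continuous.prodMk_right s)).neg.continuousOn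
    have hle : -w (max s 0) y' ≤ sSup ((fun y => -w (max s 0) y) '' K) :=
      le_csSup hbdd (mem_image_of_mem _ hy'K)
    simp only [max_eq_left hs, hy'] at hle ⊢
    linarith [le_max_right 0 (sSup ((fun y => -w s y) '' K))]
  · rintro _ ⟨y, -, rfl⟩
    simpa only [max_eq_left hs] using hwB y

end TimeSlices

section Solution

variable {E : Type*} [NormedAddCommGroup E] [MeasureSpace E]

def SolvesNonlocal (ρ : E → ℝ) (c w : ℝ → E → ℝ) : Prop :=
  ∀ x, ∀ t ∈ Ici (0 : ℝ),
    HasDerivWithinAt (fun s => w s x) (nonlocalOp ρ (w t) x + c t x * w t x) (Ici 0) t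

variable {ρ : E → ℝ} {c w : ℝ → E → ℝ}

theorem SolvesNonlocal.monotoneOn (hsol : SolvesNonlocal ρ c w) (hρ0 : ∀ z, 0 ≤ ρ z)
    (hw : ContinuousOn (fun q : ℝ × E => w q.1 q.2) (Ici 0 ×ˢ univ))
    (hc0 : ∀ t x, 0 ≤ c t x) (hnn : ∀ t, 0 ≤ t → ∀ x, 0 ≤ w t x) (x : E) :
    MonotoneOn (fun s => w s x) (Ici 0) := by
  refine monotoneOn_of_hasDerivWithinAt_nonneg (convex_Ici 0)
    (continuousOn_Ici_of_continuousOn_Ici_prod hw x)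
    (fun t ht => (hsol x t (interior_subset ht)).mono interior_subset) fun t ht => ?_
  have ht : 0 ≤ t := interior_subset ht
  exact add_nonneg (nonlocalOp_nonneg hρ0 (hnn t ht) x) (mul_nonneg (hc0 t x) (hnn t ht x))

variable [BorelSpace E] [(volume : Measure E).IsAddHaarMeasure]

theorem SolvesNonlocal.exp_mul_sub (hρ : Continuous ρ) (hρc : HasCompactSupport ρ)
    {u₁ u₂ : ℝ → E → ℝ} (h₁ : SolvesNonlocal ρ c u₁) (h₂ : SolvesNonlocal ρ c u₂)
    (hu₁ : ContinuousOn (fun q : ℝ × E => u₁ q.1 q.2) (Ici 0 ×ˢ univ))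
    (hu₂ : ContinuousOn (fun q : ℝ × E => u₂ q.1 q.2) (Ici 0 ×ˢ univ)) (γ : ℝ) :
    SolvesNonlocal ρ (fun t x => c t x + γ)
      (fun t x => Real.exp (γ * t) * (u₂ t x - u₁ t x)) := by
  intro x t ht
  have hexp : HasDerivAt (fun s => Real.exp (γ * s)) (Real.exp (γ * t) * γ) t := by
    simpa using ((hasDerivAt_id t).const_mul γ).exp
  rw [nonlocalOp_const_mul, nonlocalOp_sub hρ hρc (continuous_of_continuousOn_Ici_prod hu₂ ht)
    (continuous_of_continuousOn_Ici_prod hu₁ ht)]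
  exact (hexp.hasDerivWithinAt.mul ((h₂ x t ht).sub (h₁ x t ht))).congr_deriv
    (by simp only [Pi.sub_apply]; ring)

theorem neg_mul_le_nonlocalOp_add_mul (hρ : Continuous ρ) (hρc : HasCompactSupport ρ)
    (hρ0 : ∀ z, 0 ≤ ρ z) {φ : E → ℝ} (hφ : Continuous φ) {m : ℝ} (hm : 0 ≤ m)
    (hφm : ∀ y, -m ≤ φ y) {a C : ℝ} (ha : a ∈ Icc 0 C) (x : E) :
    -(((∫ z, ρ z) + C) * m) ≤ nonlocalOp ρ φ x + a * φ x := by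
  have hJ := neg_mul_integral_le_nonlocalOp hρ hρc hρ0 hφ hφm x
  nlinarith [hφm x, ha.1, ha.2]

theorem SolvesNonlocal.nonneg (hsol : SolvesNonlocal ρ c w) (hρ : Continuous ρ)
    (hρc : HasCompactSupport ρ) (hρ0 : ∀ z, 0 ≤ ρ z)
    (hw : ContinuousOn (fun q : ℝ × E => w q.1 q.2) (Ici 0 ×ˢ univ))
    {C : ℝ} (hc : ∀ t x, c t x ∈ Icc 0 C) {K : Set E} (hK : IsCompact K)
    (hKw : ∀ t, 0 ≤ t → range (w t) ⊆ w t '' K) (h0 : ∀ x, 0 ≤ w 0 x) :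
    ∀ t, 0 ≤ t → ∀ x, 0 ≤ w t x := by
  intro t ht x
  have hC : 0 ≤ C := (hc 0 x).1.trans (hc 0 x).2
  obtain ⟨M, hMc, hM0, hwM, hMle⟩ := exists_continuous_sup_negPart hw hK hKw
  have hlow : ∀ s, 0 ≤ s → ∀ y, -(((∫ z, ρ z) + C) * ∫ r in (0)..s, M r) ≤ w s y := by
    intro s hs y
    have := intervalIntegral.integral_le_sub_of_hasDeriv_right_of_le hs
      ((continuousOn_Ici_of_continuousOn_Ici_prod hw y).mono Icc_subset_Ici_self)
      (fun r hr => (hsol y r hr.1.le).mono (Ioi_subset_Ici hr.1.le))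
      (by fun_prop : Continuous fun r => -(((∫ z, ρ z) + C) * M r)).integrableOn_Icc
      fun r hr => neg_mul_le_nonlocalOp_add_mul hρ hρc hρ0
        (continuous_of_continuousOn_Ici_prod hw hr.1.le) (hM0 r) (hwM r hr.1.le) (hc r y) y
    rw [intervalIntegral.integral_neg, intervalIntegral.integral_const_mul] at this
    linarith [h0 y]
  have hMK : ∀ s, 0 ≤ s → M s ≤ ((∫ z, ρ z) + C) * ∫ r in (0)..s, M r := fun s hs =>
    hMle s hs (mul_nonneg (add_nonneg (integral_nonneg hρ0) hC)
      (intervalIntegral.integral_nonneg hs fun r _ => hM0 r)) fun y => neg_le.mp (hlow s hs y)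
  simpa [eq_zero_of_le_mul_intervalIntegral hMc (fun s _ => hM0 s) hMK ht] using hwM t ht x

theorem SolvesNonlocal.eq_zero_on_ball (hsol : SolvesNonlocal ρ c w) (hρ : Continuous ρ)
    (hρc : HasCompactSupport ρ) (hρ0 : ∀ z, 0 ≤ ρ z) {r : ℝ} (hρr : ∀ z, ‖z‖ < r → 0 < ρ z)
    (hw : ContinuousOn (fun q : ℝ × E => w q.1 q.2) (Ici 0 ×ˢ univ))
    (hc0 : ∀ t x, 0 ≤ c t x) (hnn : ∀ t, 0 ≤ t → ∀ x, 0 ≤ w t x) {t : ℝ} (ht : 0 < t) {x : E}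
    (hx : w t x = 0) : ∀ y ∈ ball x r, w t y = 0 := by
  have hzero : ∀ s ∈ Ioo 0 t, w s x = 0 := fun s hs => le_antisymm
    (hx ▸ hsol.monotoneOn hρ0 hw hc0 hnn x hs.1.le ht.le hs.2.le) (hnn s hs.1.le x)
  have hJ : ∀ s ∈ Ioo 0 t, nonlocalOp ρ (w s) x = 0 := by
    intro s hs
    have h₁ := (hsol x s hs.1.le).hasDerivAt (Ici_mem_nhds hs.1)
    have h₂ : HasDerivAt (fun s => w s x) 0 s := (hasDerivAt_const s 0).congr_of_eventuallyEq
      (eventually_of_mem (Ioo_mem_nhds hs.1 hs.2) hzero)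
    simpa [hzero s hs] using h₁.unique h₂
  intro y hy
  have hlim : Tendsto (fun s => w s y) (𝓝[<] t) (𝓝 (w t y)) :=
    ((continuousOn_Ici_of_continuousOn_Ici_prod hw y t ht.le).mono_of_mem_nhdsWithin
      (mem_of_superset (Ioo_mem_nhdsLT ht) fun _ hs => hs.1.le)).tendsto
  refine tendsto_nhds_unique hlim (tendsto_const_nhds.congr' ?_)
  filter_upwards [Ioo_mem_nhdsLT ht] with s hs
  exact (eq_zero_on_ball_of_nonlocalOp_eq_zero hρ hρc hρ0 hρr
    (continuous_of_continuousOn_Ici_prod hw hs.1.le) (hnn s hs.1.le) (hJ s hs) y hy).symm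

theorem SolvesNonlocal.pos [PreconnectedSpace E] (hsol : SolvesNonlocal ρ c w)
    (hρ : Continuous ρ) (hρc : HasCompactSupport ρ) (hρ0 : ∀ z, 0 ≤ ρ z) {r : ℝ} (hr : 0 < r)
    (hρr : ∀ z, ‖z‖ < r → 0 < ρ z)
    (hw : ContinuousOn (fun q : ℝ × E => w q.1 q.2) (Ici 0 ×ˢ univ))
    (hc0 : ∀ t x, 0 ≤ c t x) (hnn : ∀ t, 0 ≤ t → ∀ x, 0 ≤ w t x) {x₀ : E} (hx₀ : 0 < w 0 x₀) :
    ∀ t, 0 < t → ∀ x, 0 < w t x := by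
  intro t ht x
  refine (hnn t ht.le x).lt_of_ne' fun hx => ?_
  have hZ : {y | w t y = 0} = univ := IsClopen.eq_univ
    ⟨isClosed_eq (continuous_of_continuousOn_Ici_prod hw ht.le) continuous_const,
      isOpen_iff_mem_nhds.2 fun y hy => mem_of_superset (ball_mem_nhds y hr)
        (hsol.eq_zero_on_ball hρ hρc hρ0 hρr hw hc0 hnn ht hy)⟩ ⟨x, hx⟩
  have hx₀t : x₀ ∈ {y | w t y = 0} := hZ ▸ mem_univ x₀
  linarith [hsol.monotoneOn hρ0 hw hc0 hnn x₀ (mem_Ici.2 le_rfl) ht.le ht.le, hx₀t.out]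

end Solution

theorem strong_monotonicity_periodic_general {N : ℕ}
    (ξ : EuclideanSpace ℝ (Fin N)) (μ : ℝ)
    (k : EuclideanSpace ℝ (Fin N) → ℝ) (r₀ : ℝ) (hr₀ : 0 < r₀)
    (hkc : Continuous k) (hknn : ∀ z, 0 ≤ k z)
    (hkpos : ∀ z, ‖z‖ < r₀ → 0 < k z) (hkzero : ∀ z, r₀ ≤ ‖z‖ → k z = 0)
    (p : Fin N → ℝ) (hp : ∀ i, 0 < p i)
    (a : ℝ → EuclideanSpace ℝ (Fin N) → ℝ)
    (hab : ∃ C : ℝ, ∀ t x, |a t x| ≤ C)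
    (v₁ v₂ : EuclideanSpace ℝ (Fin N) → ℝ)
    (hle : ∀ x, v₁ x ≤ v₂ x) (hne : v₁ ≠ v₂)
    (u₁ u₂ : ℝ → EuclideanSpace ℝ (Fin N) → ℝ)
    (hc₁ : ContinuousOn (fun q : ℝ × EuclideanSpace ℝ (Fin N) => u₁ q.1 q.2)
      (Set.Ici 0 ×ˢ Set.univ))
    (hc₂ : ContinuousOn (fun q : ℝ × EuclideanSpace ℝ (Fin N) => u₂ q.1 q.2)
      (Set.Ici 0 ×ˢ Set.univ))
    (hinit₁ : ∀ x, u₁ 0 x = v₁ x) (hinit₂ : ∀ x, u₂ 0 x = v₂ x)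
    (hper₁ : ∀ t x i, u₁ t (x + p i • EuclideanSpace.single i (1 : ℝ)) = u₁ t x)
    (hper₂ : ∀ t x i, u₂ t (x + p i • EuclideanSpace.single i (1 : ℝ)) = u₂ t x)
    (heq₁ : ∀ x, ∀ t ∈ Set.Ici (0 : ℝ),
      HasDerivWithinAt (fun s => u₁ s x)
        ((∫ y, Real.exp (-μ * (inner ℝ (y - x) ξ : ℝ)) * k (y - x) * u₁ t y) -
          u₁ t x + a t x * u₁ t x) (Set.Ici 0) t)
    (heq₂ : ∀ x, ∀ t ∈ Set.Ici (0 : ℝ),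
      HasDerivWithinAt (fun s => u₂ s x)
        ((∫ y, Real.exp (-μ * (inner ℝ (y - x) ξ : ℝ)) * k (y - x) * u₂ t y) -
          u₂ t x + a t x * u₂ t x) (Set.Ici 0) t) :
    ∀ t : ℝ, 0 < t → ∀ x, u₁ t x < u₂ t x := by
  obtain ⟨C, hC⟩ := hab
  set ρ : EuclideanSpace ℝ (Fin N) → ℝ := fun z => Real.exp (-μ * inner ℝ z ξ) * k z
  have hρ : Continuous ρ := by fun_prop
  have hρ0 : ∀ z, 0 ≤ ρ z := fun z => mul_nonneg (Real.exp_pos _).le (hknn z)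
  have hρr : ∀ z, ‖z‖ < r₀ → 0 < ρ z := fun z hz => mul_pos (Real.exp_pos _) (hkpos z hz)
  have hρc : HasCompactSupport ρ := HasCompactSupport.intro (isCompact_closedBall 0 r₀)
    fun z hz => by simp [ρ, hkzero z (by simpa using hz : r₀ < ‖z‖).le]
  have h₁ : SolvesNonlocal ρ (fun t x => a t x - 1) u₁ := fun x t ht =>
    (heq₁ x t ht).congr_deriv (by simp only [nonlocalOp, ρ]; ring)
  have h₂ : SolvesNonlocal ρ (fun t x => a t x - 1) u₂ := fun x t ht =>
    (heq₂ x t ht).congr_deriv (by simp only [nonlocalOp, ρ]; ring)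
  -- the factor `exp ((C + 1) t)` makes the zeroth-order coefficient `a - 1 + (C + 1)` nonnegative
  set w : ℝ → EuclideanSpace ℝ (Fin N) → ℝ :=
    fun t x => Real.exp ((C + 1) * t) * (u₂ t x - u₁ t x)
  have hsol : SolvesNonlocal ρ (fun t x => a t x - 1 + (C + 1)) w :=
    h₁.exp_mul_sub hρ hρc h₂ hc₁ hc₂ (C + 1)
  have hw : ContinuousOn (fun q : ℝ × EuclideanSpace ℝ (Fin N) => w q.1 q.2) (Ici 0 ×ˢ univ) :=
    (by fun_prop : Continuous fun q : ℝ × EuclideanSpace ℝ (Fin N) =>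
      Real.exp ((C + 1) * q.1)).continuousOn.mul (hc₂.sub hc₁)
  have hc : ∀ t x, a t x - 1 + (C + 1) ∈ Icc 0 (2 * C) := fun t x => by
    constructor <;> linarith [abs_le.mp (hC t x)]
  obtain ⟨K, hK, hKper⟩ := EuclideanSpace.exists_isCompact_image_eq_range_of_periodic hp
  have hKw : ∀ t, 0 ≤ t → range (w t) ⊆ w t '' K := fun t _ =>
    (hKper (w t) fun i x => by simp only [w, hper₁, hper₂]).ge
  have hw0 : ∀ x, 0 ≤ w 0 x := fun x => by simpa [w, hinit₁, hinit₂] using hle x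
  obtain ⟨x₀, hx₀⟩ : ∃ x₀, 0 < w 0 x₀ := by
    obtain ⟨x₀, hx₀⟩ := Function.ne_iff.mp hne
    exact ⟨x₀, by simpa [w, hinit₁, hinit₂] using (hle x₀).lt_of_ne hx₀⟩
  have hnn := hsol.nonneg hρ hρc hρ0 hw hc hK hKw hw0
  intro t ht x
  have hwpos := hsol.pos hρ hρc hρ0 hr₀ hρr hw (fun t x => (hc t x).1) hnn hx₀ t ht x
  exact sub_pos.mp ((mul_pos_iff_of_pos_left (Real.exp_pos _)).mp hwpos)

/-- Strong monotonicity of the solution operator of the linear nonlocal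
equation on spatially periodic functions: if `v₁ ≤ v₂`, `v₁ ≠ v₂`, then the corresponding
solutions satisfy `u₁(t,x) < u₂(t,x)` for every `t > 0` and every `x`. -/
theorem strong_monotonicity_periodic {N : ℕ}
    (ξ : EuclideanSpace ℝ (Fin N)) (hξ : ‖ξ‖ = 1) (μ : ℝ)
    (k : EuclideanSpace ℝ (Fin N) → ℝ) (r₀ : ℝ) (hr₀ : 0 < r₀)
    (hkc : Continuous k) (hknn : ∀ z, 0 ≤ k z)
    (hkpos : ∀ z, ‖z‖ < r₀ → 0 < k z) (hkzero : ∀ z, r₀ ≤ ‖z‖ → k z = 0)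
    (hkint : ∫ z, k z = 1)
    (p : Fin N → ℝ) (hp : ∀ i, 0 < p i)
    (a : ℝ → EuclideanSpace ℝ (Fin N) → ℝ)
    (hac : Continuous fun q : ℝ × EuclideanSpace ℝ (Fin N) => a q.1 q.2)
    (hab : ∃ C : ℝ, ∀ t x, |a t x| ≤ C)
    (v₁ v₂ : EuclideanSpace ℝ (Fin N) → ℝ)
    (hv₁c : Continuous v₁) (hv₂c : Continuous v₂)
    (hv₁per : ∀ x i, v₁ (x + p i • EuclideanSpace.single i (1 : ℝ)) = v₁ x)
    (hv₂per : ∀ x i, v₂ (x + p i • EuclideanSpace.single i (1 : ℝ)) = v₂ x)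
    (hle : ∀ x, v₁ x ≤ v₂ x) (hne : v₁ ≠ v₂)
    (u₁ u₂ : ℝ → EuclideanSpace ℝ (Fin N) → ℝ)
    (hc₁ : ContinuousOn (fun q : ℝ × EuclideanSpace ℝ (Fin N) => u₁ q.1 q.2)
      (Set.Ici 0 ×ˢ Set.univ))
    (hc₂ : ContinuousOn (fun q : ℝ × EuclideanSpace ℝ (Fin N) => u₂ q.1 q.2)
      (Set.Ici 0 ×ˢ Set.univ))
    (hinit₁ : ∀ x, u₁ 0 x = v₁ x) (hinit₂ : ∀ x, u₂ 0 x = v₂ x)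
    (hper₁ : ∀ t x i, u₁ t (x + p i • EuclideanSpace.single i (1 : ℝ)) = u₁ t x)
    (hper₂ : ∀ t x i, u₂ t (x + p i • EuclideanSpace.single i (1 : ℝ)) = u₂ t x)
    (heq₁ : ∀ x, ∀ t ∈ Set.Ici (0 : ℝ),
      HasDerivWithinAt (fun s => u₁ s x)
        ((∫ y, Real.exp (-μ * (inner ℝ (y - x) ξ : ℝ)) * k (y - x) * u₁ t y) -
          u₁ t x + a t x * u₁ t x) (Set.Ici 0) t)
    (heq₂ : ∀ x, ∀ t ∈ Set.Ici (0 : ℝ),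
      HasDerivWithinAt (fun s => u₂ s x)
        ((∫ y, Real.exp (-μ * (inner ℝ (y - x) ξ : ℝ)) * k (y - x) * u₂ t y) -
          u₂ t x + a t x * u₂ t x) (Set.Ici 0) t) :
    ∀ t : ℝ, 0 < t → ∀ x, u₁ t x < u₂ t x :=
  strong_monotonicity_periodic_general ξ μ k r₀ hr₀ hkc hknn hkpos hkzero p hp a hab v₁ v₂ hle hne
    u₁ u₂ hc₁ hc₂ hinit₁ hinit₂ hper₁ hper₂ heq₁ heq₂
end

section
/- Let w : [0,T]×ℝ^N → ℝ be continuous with w(0,·) ≥ 0 satisfying the integral inequality w(t,x) ≥ w(0,x) + ∫₀ᵗ [ (𝒦₀w)(s,x) + c(s,x) w(s,x) ] ds for all t ∈ [0,T], x ∈ ℝ^N, where (𝒦₀w)(s,x) = ∫k(y−x)w(s,y)dy with k ≥ 0 integrable, c is bounded with c(s,x) ≥ 0, and w is bounded below. Then w(t,x) ≥ 0 for all t ∈ [0,T], x ∈ ℝ^N. -/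
/-!
A lower bound `w(s,·) ≥ -φ(s)` on `[0,T]` propagates through the integral inequality to
`w(t,·) ≥ -K ∫₀ᵗ φ` with `K = ∫ k + C`, because `k ≥ 0` has mass `∫ k` and `0 ≤ c ≤ C`.
Starting from `φ = b` and iterating gives `w(t,·) ≥ -b (Kt)ⁿ / n!` for every `n`, and these
Picard-type bounds tend to `0`. Integrability of `w` is never needed: a non-integrable integrand
has integral `0`, which lies above every nonpositive lower bound.
-/

open MeasureTheory Set Filter Topology

theorem integral_mono_of_integral_nonpos {α : Type*} [MeasurableSpace α] {μ : Measure α}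
    {f g : α → ℝ} (hg : Integrable g μ) (hg0 : ∫ x, g x ∂μ ≤ 0) (hgf : g ≤ᵐ[μ] f) :
    ∫ x, g x ∂μ ≤ ∫ x, f x ∂μ := by
  by_cases hf : Integrable f μ
  · exact integral_mono_ae hg hf hgf
  · rwa [integral_undef hf]

theorem intervalIntegral.integral_mono_on_of_integral_nonpos {f g : ℝ → ℝ} {a b : ℝ}
    (hab : a ≤ b) (hg : IntervalIntegrable g volume a b) (hg0 : ∫ x in a..b, g x ≤ 0)
    (hgf : ∀ x ∈ Icc a b, g x ≤ f x) : ∫ x in a..b, g x ≤ ∫ x in a..b, f x := by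
  by_cases hf : IntervalIntegrable f volume a b
  · exact intervalIntegral.integral_mono_on hab hg hf hgf
  · rwa [intervalIntegral.integral_undef hf]

theorem neg_mul_integral_le_integral_comp_sub_mul {G : Type*} [AddGroup G] [MeasurableSpace G]
    [MeasurableAdd G] {μ : Measure G} [μ.IsAddRightInvariant] {k f : G → ℝ}
    (hk : ∀ z, 0 ≤ k z) (hki : Integrable k μ) {a : ℝ} (ha : 0 ≤ a) (hf : ∀ y, -a ≤ f y)
    (x : G) : -(a * ∫ z, k z ∂μ) ≤ ∫ y, k (y - x) * f y ∂μ := by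
  have hlower : ∫ y, -a * k (y - x) ∂μ = -(a * ∫ z, k z ∂μ) := by
    rw [integral_const_mul, integral_sub_right_eq_self k x, neg_mul]
  rw [← hlower]
  refine integral_mono_of_integral_nonpos ((hki.comp_sub_right x).const_mul _) ?_
    (Eventually.of_forall fun y => ?_)
  · rw [hlower, neg_nonpos]
    exact mul_nonneg ha (integral_nonneg hk)
  · simpa only [mul_comm] using mul_le_mul_of_nonneg_left (hf y) (hk (y - x))

theorem neg_mul_le_integral_comp_sub_mul_add_mul {G : Type*} [AddGroup G] [MeasurableSpace G]
    [MeasurableAdd G] {μ : Measure G} [μ.IsAddRightInvariant] {k f : G → ℝ}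
    (hk : ∀ z, 0 ≤ k z) (hki : Integrable k μ) {a c C : ℝ} (ha : 0 ≤ a) (hf : ∀ y, -a ≤ f y)
    (hc : 0 ≤ c) (hcC : c ≤ C) (x : G) :
    -((∫ z, k z ∂μ + C) * a) ≤ (∫ y, k (y - x) * f y ∂μ) + c * f x := by
  have hnonlocal := neg_mul_integral_le_integral_comp_sub_mul hk hki ha hf x
  have hreaction : -(C * a) ≤ c * f x := by
    nlinarith [mul_le_mul_of_nonneg_left (hf x) hc, mul_le_mul_of_nonneg_right hcC ha]
  linarith

theorem intervalIntegral_mul_pow_div_factorial (K b t : ℝ) (n : ℕ) :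
    ∫ s in (0 : ℝ)..t, K * (b * (K * s) ^ n / n.factorial)
      = b * (K * t) ^ (n + 1) / (n + 1).factorial := by
  simp_rw [mul_pow, mul_div_assoc', ← mul_assoc]
  rw [intervalIntegral.integral_div, intervalIntegral.integral_const_mul, integral_pow,
    Nat.factorial_succ]
  push_cast
  field_simp
  ring

theorem nonneg_of_picard_lower_bound {α : Type*} {w : ℝ → α → ℝ} {T K : ℝ} (hK : 0 ≤ K)
    (hlb : ∃ b : ℝ, ∀ t ∈ Icc 0 T, ∀ x, -b ≤ w t x)
    (hstep : ∀ φ : ℝ → ℝ, Continuous φ → (∀ s ∈ Icc 0 T, 0 ≤ φ s) →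
      (∀ s ∈ Icc 0 T, ∀ x, -φ s ≤ w s x) →
      ∀ t ∈ Icc 0 T, ∀ x, -∫ s in (0 : ℝ)..t, K * φ s ≤ w t x) :
    ∀ t ∈ Icc 0 T, ∀ x, 0 ≤ w t x := by
  obtain ⟨b₀, hb₀⟩ := hlb
  set b := max b₀ 0
  have hbound : ∀ n : ℕ, ∀ t ∈ Icc 0 T, ∀ x, -(b * (K * t) ^ n / n.factorial) ≤ w t x := by
    intro n
    induction n with
    | zero =>
      intro t ht x
      simpa using (neg_le_neg (le_max_left b₀ 0)).trans (hb₀ t ht x)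
    | succ n ih =>
      intro t ht x
      rw [← intervalIntegral_mul_pow_div_factorial]
      refine hstep _ (by fun_prop) (fun s hs => ?_) ih t ht x
      have : 0 ≤ K * s := mul_nonneg hK hs.1
      positivity
  intro t ht x
  have hlim : Tendsto (fun n : ℕ => -(b * (K * t) ^ n / n.factorial)) atTop (𝓝 0) := by
    simpa [mul_div_assoc] using
      ((FloorSemiring.tendsto_pow_div_factorial_atTop (K * t)).const_mul b).neg
  exact le_of_tendsto' hlim fun n => hbound n t ht x

theorem positivity_from_integral_inequality_general {N : ℕ} (T : ℝ)
    (k : EuclideanSpace ℝ (Fin N) → ℝ) (hknn : ∀ z, 0 ≤ k z) (hkint : Integrable k)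
    (c : ℝ → EuclideanSpace ℝ (Fin N) → ℝ)
    (hcnn : ∀ s x, 0 ≤ c s x) (hcb : ∃ C : ℝ, ∀ s x, |c s x| ≤ C)
    (w : ℝ → EuclideanSpace ℝ (Fin N) → ℝ)
    (hwlb : ∃ b : ℝ, ∀ t ∈ Set.Icc (0 : ℝ) T, ∀ x, -b ≤ w t x)
    (hw0 : ∀ x, 0 ≤ w 0 x)
    (hineq : ∀ t ∈ Set.Icc (0 : ℝ) T, ∀ x,
      w 0 x + ∫ s in (0 : ℝ)..t, ((∫ y, k (y - x) * w s y) + c s x * w s x) ≤ w t x) :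
    ∀ t ∈ Set.Icc (0 : ℝ) T, ∀ x, 0 ≤ w t x := by
  obtain ⟨C, hC⟩ := hcb
  set K := (∫ z, k z) + C
  have hK : 0 ≤ K := add_nonneg (integral_nonneg hknn) ((abs_nonneg _).trans (hC 0 0))
  refine nonneg_of_picard_lower_bound hK hwlb fun φ hφ hφ0 hφw t ht x => ?_
  have hφ0' : ∀ s ∈ Icc 0 t, 0 ≤ φ s := fun s hs => hφ0 s ⟨hs.1, hs.2.trans ht.2⟩
  have hrate : ∀ s ∈ Icc 0 t, -(K * φ s) ≤ (∫ y, k (y - x) * w s y) + c s x * w s x :=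
    fun s hs => neg_mul_le_integral_comp_sub_mul_add_mul hknn hkint (hφ0' s hs)
      (hφw s ⟨hs.1, hs.2.trans ht.2⟩) (hcnn s x) ((le_abs_self _).trans (hC s x)) x
  have hlower_nonpos : ∫ s in (0 : ℝ)..t, -(K * φ s) ≤ 0 := by
    rw [intervalIntegral.integral_neg, neg_nonpos]
    exact intervalIntegral.integral_nonneg ht.1 fun s hs => mul_nonneg hK (hφ0' s hs)
  have hintegral : -∫ s in (0 : ℝ)..t, K * φ s
      ≤ ∫ s in (0 : ℝ)..t, ((∫ y, k (y - x) * w s y) + c s x * w s x) := by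
    rw [← intervalIntegral.integral_neg]
    exact intervalIntegral.integral_mono_on_of_integral_nonpos ht.1
      ((hφ.const_mul K).neg.intervalIntegrable 0 t) hlower_nonpos hrate
  linarith [hineq t ht x, hw0 x]

/-- Positivity lemma: if `w` is continuous, bounded below, `w(0,·) ≥ 0`, and
`w(t,x) ≥ w(0,x) + ∫₀ᵗ [(𝒦₀w)(s,x) + c(s,x) w(s,x)] ds` with `k ≥ 0` integrable and
`c ≥ 0` bounded, then `w ≥ 0` on `[0,T] × ℝ^N`. -/
theorem positivity_from_integral_inequality {N : ℕ} (T : ℝ) (hT : 0 < T)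
    (k : EuclideanSpace ℝ (Fin N) → ℝ) (hknn : ∀ z, 0 ≤ k z) (hkint : Integrable k)
    (c : ℝ → EuclideanSpace ℝ (Fin N) → ℝ)
    (hcnn : ∀ s x, 0 ≤ c s x) (hcb : ∃ C : ℝ, ∀ s x, |c s x| ≤ C)
    (w : ℝ → EuclideanSpace ℝ (Fin N) → ℝ)
    (hwc : ContinuousOn (fun q : ℝ × EuclideanSpace ℝ (Fin N) => w q.1 q.2)
      (Set.Icc 0 T ×ˢ Set.univ))
    (hwlb : ∃ b : ℝ, ∀ t ∈ Set.Icc (0 : ℝ) T, ∀ x, -b ≤ w t x)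
    (hw0 : ∀ x, 0 ≤ w 0 x)
    (hineq : ∀ t ∈ Set.Icc (0 : ℝ) T, ∀ x,
      w 0 x + ∫ s in (0 : ℝ)..t, ((∫ y, k (y - x) * w s y) + c s x * w s x) ≤ w t x) :
    ∀ t ∈ Set.Icc (0 : ℝ) T, ∀ x, 0 ≤ w t x :=
  positivity_from_integral_inequality_general T k hknn hkint c hcnn hcb w hwlb hw0 hineq
end
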